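/- arXiv:2512.21413 — 3 statements merged into one kernel-verified Lean document; each statement's English description precedes it below -/
import Mathlib

section
/- Let n ∈ ℕ and let r1, r2, d ∈ ℂ satisfy r1 + r2 + 2d + 2 = k with k an even integer, k ≥ 6, Re(r1) ≥ 0, Re(r2) ≥ 0 and Re(d) > 0. Then there exists a constant C > 0 such that |Q(n1, n−n1)| ≤ C·|n1|^{−Re(d)−1} for all n1 ∈ ℤ∖{0, n}; consequently the family (Q(n1, n−n1)·σ_{−r1}(n1)·σ_{−r2}(n−n1)) indexed by n1 ∈ ℤ∖{0, n} is absolutely summable. -/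
open Filter Topology MeasureTheory Real

noncomputable section

/-- Divisor function `σ_a(x) = ∑_{d ∣ x, d > 0} d^a` for `a : ℂ` and a nonzero integer `x`. -/
def sigmaC (a : ℂ) (x : ℤ) : ℂ := ∑ d ∈ x.natAbs.divisors, (d : ℂ) ^ a

/-- Euler integral representation of the principal branch of
`₂F₁(d+1, d+r1+1; k; z)` with `k = 2d+2+r1+r2`. -/
def F (r1 r2 d : ℂ) (z : ℂ) : ℂ :=
  Complex.Gamma (2 * d + 2 + r1 + r2) /
      (Complex.Gamma (d + r1 + 1) * Complex.Gamma (d + r2 + 1)) *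
    ∫ t in (0:ℝ)..1, (t : ℂ) ^ (d + r1) * ((1 : ℂ) - t) ^ (d + r2) *
      ((1 : ℂ) - t * z) ^ (-(d + 1))

/-- `G₊(x) = lim_{ε→0+} F(x + iε)`. -/
def Gp (r1 r2 d : ℂ) (x : ℝ) : ℂ :=
  limUnder (𝓝[>] (0:ℝ)) (fun ε : ℝ => F r1 r2 d ((x : ℂ) + ε * Complex.I))

/-- `G₋(x) = lim_{ε→0+} F(x - iε)`. -/
def Gm (r1 r2 d : ℂ) (x : ℝ) : ℂ :=
  limUnder (𝓝[>] (0:ℝ)) (fun ε : ℝ => F r1 r2 d ((x : ℂ) - ε * Complex.I))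

/-- The convolution weight `Q(n1, n2)` (with `n2 = n - n1`), defined by
`Γ(k)·|n1/n|^{d+1}·Q(n1,n2) = (G₊ - G₋)·i^{k+1}·sin(πr2/2) + (G₊ + G₋)·c(n1)`. -/
def Q (k : ℕ) (r1 r2 d : ℂ) (n : ℕ) (n1 : ℤ) : ℂ :=
  ((Gp r1 r2 d ((n : ℝ) / (n1 : ℝ)) - Gm r1 r2 d ((n : ℝ) / (n1 : ℝ))) *
      Complex.I ^ (k + 1) * Complex.sin ((π : ℂ) * r2 / 2) +
    (Gp r1 r2 d ((n : ℝ) / (n1 : ℝ)) + Gm r1 r2 d ((n : ℝ) / (n1 : ℝ))) *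
      (if 0 < n1 then Complex.I ^ k * Complex.cos ((π : ℂ) * r2 / 2)
        else Complex.cos ((π : ℂ) * r1 / 2))) /
    (Complex.Gamma (2 * d + 2 + r1 + r2) * ((|(n1 : ℝ) / (n : ℝ)| : ℝ) : ℂ) ^ (d + 1))

/-!
If `n1 ∉ [0, n]` then `x = n / n1 ≤ n / (n + 1) < 1` lies left of the cut `[1, ∞)`. On every
half-plane `Re z ≤ c < 1` Euler's integrand is bounded uniformly in `t ∈ [0, 1]`, so `F` is bounded
there and (by dominated convergence) continuous; hence `G₊(x) = G₋(x) = F(x)`, and the definition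
of `Q` gives `|Q(n1, n - n1)| ≪ |n1 / n|^{-Re d - 1}`. The finitely many `n1 ∈ (0, n)` only enlarge
the constant. For summability, `|σ_{-r}(m)| ≤ τ(m) ≪ |m|^ε` for every `ε > 0` (the divisor bound,
from `τ(m) = ∏ (a_p + 1)` and `a + 1 ≤ (p^ε)^a` once `p^ε ≥ 2`), so with `ε = Re d / 4` the summand
is `≪ |n1|^{-1 - Re d / 2}`.
-/

open Asymptotics
open scoped Finset

lemma norm_ofReal_cpow_le_one {x : ℝ} (hx0 : 0 ≤ x) (hx1 : x ≤ 1) {s : ℂ} (hs : 0 ≤ s.re) :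
    ‖(x : ℂ) ^ s‖ ≤ 1 :=
  calc ‖(x : ℂ) ^ s‖ ≤ ‖(x : ℂ)‖ ^ s.re / Real.exp (Complex.arg x * s.im) :=
        Complex.norm_cpow_le _ _
    _ = x ^ s.re := by simp [Complex.arg_ofReal_of_nonneg hx0, abs_of_nonneg hx0]
    _ ≤ 1 := Real.rpow_le_one hx0 hx1 hs

lemma norm_cpow_le_of_le_norm {w s : ℂ} {δ : ℝ} (hδ : 0 < δ) (hw : δ ≤ ‖w‖) (hs : s.re ≤ 0) :
    ‖w ^ s‖ ≤ δ ^ s.re * Real.exp (π * |s.im|) := by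
  have harg : -(π * |s.im|) ≤ Complex.arg w * s.im := by
    have := mul_le_mul_of_nonneg_right (Complex.abs_arg_le_pi w) (abs_nonneg s.im)
    rw [← abs_mul] at this
    exact (abs_le.1 this).1
  calc ‖w ^ s‖ ≤ ‖w‖ ^ s.re / Real.exp (Complex.arg w * s.im) := Complex.norm_cpow_le _ _
    _ ≤ δ ^ s.re / Real.exp (-(π * |s.im|)) :=
        div_le_div₀ (by positivity) (Real.rpow_le_rpow_of_nonpos hδ hw hs) (Real.exp_pos _)
          (Real.exp_le_exp.2 harg)
    _ = δ ^ s.re * Real.exp (π * |s.im|) := by rw [Real.exp_neg, div_inv_eq_mul]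

lemma norm_ofReal_abs_div_cpow (a b : ℝ) {s : ℂ} (hs : s.re ≠ 0) :
    ‖((|a / b| : ℝ) : ℂ) ^ s‖ = |a| ^ s.re / |b| ^ s.re := by
  rw [Complex.norm_cpow_eq_rpow_re_of_nonneg (abs_nonneg _) hs, abs_div,
    Real.div_rpow (abs_nonneg _) (abs_nonneg _)]

def eulerKernel (a b s z : ℂ) (t : ℝ) : ℂ := (t : ℂ) ^ a * (1 - (t : ℂ)) ^ b * (1 - t * z) ^ s

lemma F_eq_integral_eulerKernel (r1 r2 d z : ℂ) :
    F r1 r2 d z = Complex.Gamma (2 * d + 2 + r1 + r2) /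
      (Complex.Gamma (d + r1 + 1) * Complex.Gamma (d + r2 + 1)) *
      ∫ t in (0:ℝ)..1, eulerKernel (d + r1) (d + r2) (-(d + 1)) z t := rfl

lemma one_sub_le_re_one_sub_mul {c t : ℝ} {z : ℂ} (hc : 0 ≤ c) (hz : z.re ≤ c)
    (ht : t ∈ Set.Icc (0:ℝ) 1) : 1 - c ≤ (1 - t * z).re := by
  obtain ⟨ht0, ht1⟩ := ht
  simp only [Complex.sub_re, Complex.one_re, Complex.re_ofReal_mul]
  nlinarith

lemma mem_Icc_of_mem_uIoc {t : ℝ} (ht : t ∈ Set.uIoc (0:ℝ) 1) : t ∈ Set.Icc (0:ℝ) 1 :=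
  Set.Ioc_subset_Icc_self (by rwa [Set.uIoc_of_le zero_le_one] at ht)

section EulerKernel

variable {a b s : ℂ}

lemma norm_eulerKernel_le (ha : 0 ≤ a.re) (hb : 0 ≤ b.re) (hs : s.re ≤ 0) {c t : ℝ} {z : ℂ}
    (hc0 : 0 ≤ c) (hc1 : c < 1) (hz : z.re ≤ c) (ht : t ∈ Set.Icc (0:ℝ) 1) :
    ‖eulerKernel a b s z t‖ ≤ (1 - c) ^ s.re * Real.exp (π * |s.im|) := by
  obtain ⟨ht0, ht1⟩ := ht
  have hw : 1 - c ≤ ‖1 - t * z‖ :=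
    (one_sub_le_re_one_sub_mul hc0 hz ⟨ht0, ht1⟩).trans (Complex.re_le_norm _)
  have hb' : ‖(1 - (t : ℂ)) ^ b‖ ≤ 1 := by
    exact_mod_cast norm_ofReal_cpow_le_one (x := 1 - t) (by linarith) (by linarith) hb
  calc ‖eulerKernel a b s z t‖ = ‖(t : ℂ) ^ a‖ * ‖(1 - (t : ℂ)) ^ b‖ * ‖(1 - t * z) ^ s‖ := by
        simp only [eulerKernel, norm_mul]
    _ ≤ 1 * 1 * ((1 - c) ^ s.re * Real.exp (π * |s.im|)) := by
        gcongr
        · exact norm_ofReal_cpow_le_one ht0 ht1 ha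
        · exact norm_cpow_le_of_le_norm (by linarith) hw hs
    _ = (1 - c) ^ s.re * Real.exp (π * |s.im|) := by ring

lemma aestronglyMeasurable_eulerKernel (z : ℂ) (μ : Measure ℝ) :
    AEStronglyMeasurable (eulerKernel a b s z) μ := by
  unfold eulerKernel
  fun_prop

lemma continuousAt_eulerKernel {t : ℝ} (ht : t ∈ Set.Icc (0:ℝ) 1) {x : ℂ} (hx : x.re < 1) :
    ContinuousAt (fun z => eulerKernel a b s z t) x := by
  have hre : 0 < (1 - t * x).re := by
    have := one_sub_le_re_one_sub_mul (le_max_right x.re 0) (le_max_left x.re 0) ht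
    have : max x.re 0 < 1 := max_lt hx one_pos
    linarith
  unfold eulerKernel
  fun_prop (disch := exact Complex.mem_slitPlane_iff.2 (Or.inl hre))

end EulerKernel

def cFactor (k : ℕ) (r1 r2 : ℂ) (n1 : ℤ) : ℂ :=
  if 0 < n1 then Complex.I ^ k * Complex.cos ((π : ℂ) * r2 / 2) else Complex.cos ((π : ℂ) * r1 / 2)

lemma norm_cFactor_le (k : ℕ) (r1 r2 : ℂ) (n1 : ℤ) :
    ‖cFactor k r1 r2 n1‖ ≤
      max ‖Complex.I ^ k * Complex.cos ((π : ℂ) * r2 / 2)‖ ‖Complex.cos ((π : ℂ) * r1 / 2)‖ := by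
  unfold cFactor
  split_ifs
  exacts [le_max_left _ _, le_max_right _ _]

lemma natCast_div_le_of_notMem_Icc {n : ℕ} {n1 : ℤ} (h : n1 ∉ Set.Icc 0 (n : ℤ)) :
    (n : ℝ) / n1 ≤ n / (n + 1) := by
  rw [Set.mem_Icc, not_and_or, not_le, not_le] at h
  rcases h with hneg | hbig
  · have hneg' : (n1 : ℝ) < 0 := by exact_mod_cast hneg
    exact (div_nonpos_of_nonneg_of_nonpos n.cast_nonneg hneg'.le).trans (by positivity)
  · have hbig' : (n : ℝ) + 1 ≤ n1 := by exact_mod_cast Int.add_one_le_of_lt hbig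
    exact div_le_div_of_nonneg_left n.cast_nonneg (by positivity) hbig'

section EulerIntegral

variable {r1 r2 d : ℂ}

lemma exists_norm_F_le (h1 : 0 ≤ (d + r1).re) (h2 : 0 ≤ (d + r2).re) (hd : -1 ≤ d.re) {c : ℝ}
    (hc0 : 0 ≤ c) (hc1 : c < 1) : ∃ B, ∀ z : ℂ, z.re ≤ c → ‖F r1 r2 d z‖ ≤ B := by
  have hs : (-(d + 1)).re ≤ 0 := by simp; linarith
  refine ⟨‖Complex.Gamma (2 * d + 2 + r1 + r2) /
      (Complex.Gamma (d + r1 + 1) * Complex.Gamma (d + r2 + 1))‖ *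
      ((1 - c) ^ (-(d + 1)).re * Real.exp (π * |(-(d + 1)).im|)), fun z hz => ?_⟩
  rw [F_eq_integral_eulerKernel, norm_mul]
  gcongr
  simpa using intervalIntegral.norm_integral_le_of_norm_le_const (a := 0) (b := 1) fun t ht =>
    norm_eulerKernel_le h1 h2 hs hc0 hc1 hz (mem_Icc_of_mem_uIoc ht)

lemma continuousAt_F (h1 : 0 ≤ (d + r1).re) (h2 : 0 ≤ (d + r2).re) (hd : -1 ≤ d.re) {x : ℂ}
    (hx : x.re < 1) : ContinuousAt (F r1 r2 d) x := by
  have hs : (-(d + 1)).re ≤ 0 := by simp; linarith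
  obtain ⟨c, hc0, hc1, hxc⟩ : ∃ c : ℝ, 0 ≤ c ∧ c < 1 ∧ x.re < c :=
    ⟨(max x.re 0 + 1) / 2, by positivity, by linarith [max_lt hx one_pos],
      by linarith [le_max_left x.re 0, max_lt hx one_pos]⟩
  have hnear : ∀ᶠ z in 𝓝 x, z.re ≤ c := (Complex.continuous_re.tendsto x).eventually_le_const hxc
  refine continuousAt_const.mul (intervalIntegral.continuousAt_of_dominated_interval
    (F := fun z t => eulerKernel (d + r1) (d + r2) (-(d + 1)) z t)
    (Eventually.of_forall fun z => aestronglyMeasurable_eulerKernel z _)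
    (hnear.mono fun z hz => ae_of_all _ fun t ht =>
      norm_eulerKernel_le h1 h2 hs hc0 hc1 hz (mem_Icc_of_mem_uIoc ht))
    intervalIntegrable_const
    (ae_of_all _ fun t ht =>
      continuousAt_eulerKernel (mem_Icc_of_mem_uIoc ht) hx))

lemma limUnder_F_eq (h1 : 0 ≤ (d + r1).re) (h2 : 0 ≤ (d + r2).re) (hd : -1 ≤ d.re) {x : ℝ}
    (hx : x < 1) (v : ℂ) :
    limUnder (𝓝[>] (0:ℝ)) (fun ε : ℝ => F r1 r2 d (x + ε * v)) = F r1 r2 d x := by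
  refine Tendsto.limUnder_eq ((continuousAt_F h1 h2 hd (by simpa using hx)).tendsto.comp ?_)
  refine tendsto_nhdsWithin_of_tendsto_nhds ?_
  simpa using (show Continuous fun ε : ℝ => (x : ℂ) + ε * v by fun_prop).tendsto 0

lemma Gp_eq_F (h1 : 0 ≤ (d + r1).re) (h2 : 0 ≤ (d + r2).re) (hd : -1 ≤ d.re) {x : ℝ}
    (hx : x < 1) : Gp r1 r2 d x = F r1 r2 d x :=
  limUnder_F_eq h1 h2 hd hx Complex.I

lemma Gm_eq_F (h1 : 0 ≤ (d + r1).re) (h2 : 0 ≤ (d + r2).re) (hd : -1 ≤ d.re) {x : ℝ}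
    (hx : x < 1) : Gm r1 r2 d x = F r1 r2 d x := by
  simpa only [Gm, sub_eq_add_neg, ← mul_neg] using limUnder_F_eq h1 h2 hd hx (-Complex.I)

lemma Q_eq_of_lt_one (h1 : 0 ≤ (d + r1).re) (h2 : 0 ≤ (d + r2).re)
    (hd : -1 ≤ d.re) (k n : ℕ) {n1 : ℤ} (hx : (n : ℝ) / n1 < 1) :
    Q k r1 r2 d n n1 = 2 * F r1 r2 d ((n : ℝ) / n1 : ℝ) * cFactor k r1 r2 n1 /
      (Complex.Gamma (2 * d + 2 + r1 + r2) * ((|(n1 : ℝ) / n| : ℝ) : ℂ) ^ (d + 1)) := by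
  rw [Q, Gp_eq_F h1 h2 hd hx, Gm_eq_F h1 h2 hd hx, cFactor]
  ring

theorem isBigO_Q (h1 : 0 ≤ (d + r1).re) (h2 : 0 ≤ (d + r2).re) (hd : -1 < d.re)
    (k n : ℕ) :
    (fun n1 : ℤ => Q k r1 r2 d n n1) =O[cofinite] fun n1 : ℤ => |(n1 : ℝ)| ^ (-d.re - 1) := by
  have hc : (n : ℝ) / (n + 1) < 1 := (div_lt_one (by positivity)).2 (by linarith)
  obtain ⟨B, hB⟩ := exists_norm_F_le h1 h2 hd.le (by positivity) hc
  set K := max ‖Complex.I ^ k * Complex.cos ((π : ℂ) * r2 / 2)‖ ‖Complex.cos ((π : ℂ) * r1 / 2)‖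
  set Γk := Complex.Gamma (2 * d + 2 + r1 + r2)
  refine IsBigO.of_bound (2 * B * K * (n : ℝ) ^ (d.re + 1) / ‖Γk‖) ?_
  filter_upwards [(Set.finite_Icc (0:ℤ) n).eventually_cofinite_notMem] with n1 hn1
  have hx := natCast_div_le_of_notMem_Icc hn1
  have hF : ‖F r1 r2 d ((n : ℝ) / n1 : ℝ)‖ ≤ B := hB _ (by simpa using hx)
  have hs : (d + 1).re = d.re + 1 := by simp
  rw [Q_eq_of_lt_one h1 h2 hd.le k n (hx.trans_lt hc), norm_div, norm_mul, norm_mul, norm_mul,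
    norm_ofReal_abs_div_cpow _ _ (by linarith), hs, Complex.norm_two, Nat.abs_cast,
    Real.norm_of_nonneg (by positivity)]
  calc _ ≤ 2 * B * K / (‖Γk‖ * (|(n1 : ℝ)| ^ (d.re + 1) / (n : ℝ) ^ (d.re + 1))) := by
        gcongr
        · linarith [(norm_nonneg _).trans hF]
        · exact norm_cFactor_le k r1 r2 n1
    _ = 2 * B * K * (n : ℝ) ^ (d.re + 1) / ‖Γk‖ * |(n1 : ℝ)| ^ (-d.re - 1) := by
        rw [show -d.re - 1 = -(d.re + 1) by ring, Real.rpow_neg (abs_nonneg _)]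
        simp only [div_eq_mul_inv, mul_inv, inv_inv]
        ring

end EulerIntegral

lemma natCast_add_one_le_pow {y : ℝ} (hy : 2 ≤ y) (a : ℕ) : (a + 1 : ℝ) ≤ y ^ a :=
  calc (a + 1 : ℝ) ≤ 2 ^ a := by exact_mod_cast Nat.lt_two_pow_self
    _ ≤ y ^ a := pow_le_pow_left₀ zero_le_two hy a

lemma natCast_add_one_le_mul_rpow_pow {ε x : ℝ} (hε : 0 < ε) (hx : 2 ≤ x) (a : ℕ) :
    (a + 1 : ℝ) ≤ (1 + (ε * Real.log 2)⁻¹) * (x ^ ε) ^ a := by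
  have hL : 0 < ε * Real.log 2 := mul_pos hε (Real.log_pos one_lt_two)
  have hexp : 1 + ε * Real.log 2 * a ≤ (x ^ ε) ^ a :=
    calc 1 + ε * Real.log 2 * a ≤ Real.exp (Real.log 2 * (ε * a)) := by
          linarith [Real.add_one_le_exp (Real.log 2 * (ε * a))]
      _ = ((2 : ℝ) ^ ε) ^ a := by
          rw [← Real.rpow_def_of_pos two_pos, Real.rpow_mul_natCast zero_le_two]
      _ ≤ (x ^ ε) ^ a := by gcongr
  calc (a + 1 : ℝ) ≤ (1 + (ε * Real.log 2)⁻¹) * (1 + ε * Real.log 2 * a) := by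
        rw [mul_add, mul_one, add_mul, one_mul, ← mul_assoc, inv_mul_cancel₀ hL.ne', one_mul]
        nlinarith [inv_pos.2 hL]
    _ ≤ (1 + (ε * Real.log 2)⁻¹) * (x ^ ε) ^ a := by gcongr

lemma prod_rpow_pow_factorization (ε : ℝ) {m : ℕ} (hm : m ≠ 0) :
    ∏ p ∈ m.primeFactors, ((p : ℝ) ^ ε) ^ m.factorization p = (m : ℝ) ^ ε := by
  simp_rw [Real.rpow_pow_comm (Nat.cast_nonneg _)]
  rw [Real.finsetProd_rpow _ _ (fun _ _ => by positivity)]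
  congr 1
  conv_rhs => rw [← Nat.prod_factorization_pow_eq_self hm]
  rw [Finsupp.prod, Nat.support_factorization]
  push_cast
  rfl

theorem Nat.exists_card_divisors_le_mul_rpow {ε : ℝ} (hε : 0 < ε) :
    ∃ C, ∀ m : ℕ, (#m.divisors : ℝ) ≤ C * (m : ℝ) ^ ε := by
  set B := 1 + (ε * Real.log 2)⁻¹
  have hB : 1 ≤ B := le_add_of_nonneg_right (by positivity)
  set N := ⌈(2 : ℝ) ^ ε⁻¹⌉₊
  set g : ℕ → ℝ := fun p => if p ≤ N then B else 1
  refine ⟨B ^ N, fun m => ?_⟩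
  rcases eq_or_ne m 0 with rfl | hm
  · simp [Real.zero_rpow hε.ne']
  have hfactor : ∀ p ∈ m.primeFactors,
      (m.factorization p + 1 : ℝ) ≤ g p * ((p : ℝ) ^ ε) ^ m.factorization p := by
    intro p hp
    have hp2 : (2 : ℝ) ≤ p := by exact_mod_cast (Nat.prime_of_mem_primeFactors hp).two_le
    by_cases hpN : p ≤ N
    · rw [show g p = B from if_pos hpN]
      exact_mod_cast natCast_add_one_le_mul_rpow_pow hε hp2 (m.factorization p)
    · have hpe : (2 : ℝ) ≤ (p : ℝ) ^ ε :=
        calc (2 : ℝ) = ((2 : ℝ) ^ ε⁻¹) ^ ε := by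
              rw [← Real.rpow_mul zero_le_two, inv_mul_cancel₀ hε.ne', Real.rpow_one]
          _ ≤ (p : ℝ) ^ ε := by
            gcongr
            exact (Nat.le_ceil _).trans (by exact_mod_cast (not_le.1 hpN).le)
      rw [show g p = 1 from if_neg hpN, one_mul]
      exact_mod_cast natCast_add_one_le_pow hpe (m.factorization p)
  have hg : ∏ p ∈ m.primeFactors, g p ≤ B ^ N := by
    rw [Finset.prod_ite, Finset.prod_const, Finset.prod_const_one, mul_one]
    refine pow_le_pow_right₀ hB
      ((Finset.card_le_card fun p hp => ?_).trans (Nat.card_Ioc 0 N).le)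
    simp only [Finset.mem_filter, Finset.mem_Ioc] at hp ⊢
    exact ⟨(Nat.prime_of_mem_primeFactors hp.1).pos, hp.2⟩
  calc (#m.divisors : ℝ) = ∏ p ∈ m.primeFactors, (m.factorization p + 1 : ℝ) := by
        rw [Nat.card_divisors hm]; push_cast; rfl
    _ ≤ ∏ p ∈ m.primeFactors, g p * ((p : ℝ) ^ ε) ^ m.factorization p :=
        Finset.prod_le_prod (fun _ _ => by positivity) hfactor
    _ = (∏ p ∈ m.primeFactors, g p) * (m : ℝ) ^ ε := by
        rw [Finset.prod_mul_distrib, prod_rpow_pow_factorization ε hm]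
    _ ≤ B ^ N * (m : ℝ) ^ ε := by gcongr

lemma norm_sigmaC_neg_le_card_divisors {r : ℂ} (hr : 0 ≤ r.re) (m : ℤ) :
    ‖sigmaC (-r) m‖ ≤ #m.natAbs.divisors :=
  calc ‖sigmaC (-r) m‖ ≤ ∑ d ∈ m.natAbs.divisors, ‖(d : ℂ) ^ (-r)‖ := norm_sum_le _ _
    _ ≤ ∑ _d ∈ m.natAbs.divisors, (1 : ℝ) := by
        refine Finset.sum_le_sum fun d hd => ?_
        have hd0 := Nat.pos_of_mem_divisors hd
        rw [Complex.norm_natCast_cpow_of_pos hd0]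
        exact Real.rpow_le_one_of_one_le_of_nonpos (by exact_mod_cast hd0) (by simpa using hr)
    _ = #m.natAbs.divisors := by simp

lemma isBigO_sigmaC {r : ℂ} (hr : 0 ≤ r.re) {ε : ℝ} (hε : 0 < ε) :
    (fun m : ℤ => sigmaC (-r) m) =O[cofinite] fun m : ℤ => |(m : ℝ)| ^ ε := by
  obtain ⟨C, hC⟩ := Nat.exists_card_divisors_le_mul_rpow hε
  refine IsBigO.of_bound C (Eventually.of_forall fun m => ?_)
  calc ‖sigmaC (-r) m‖ ≤ #m.natAbs.divisors := norm_sigmaC_neg_le_card_divisors hr m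
    _ ≤ C * (m.natAbs : ℝ) ^ ε := hC _
    _ = C * ‖|(m : ℝ)| ^ ε‖ := by
        rw [Real.norm_of_nonneg (by positivity), Nat.cast_natAbs, Int.cast_abs]

lemma isBigO_intCast_sub (a : ℤ) :
    (fun m : ℤ => ((a - m : ℤ) : ℝ)) =O[cofinite] fun m : ℤ => (m : ℝ) := by
  refine IsBigO.of_bound (|(a : ℝ)| + 1) ((eventually_cofinite_ne 0).mono fun m hm => ?_)
  have hm1 : (1 : ℝ) ≤ |(m : ℝ)| := by exact_mod_cast Int.one_le_abs hm
  simp only [Real.norm_eq_abs, Int.cast_sub]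
  nlinarith [abs_sub (a : ℝ) m, abs_nonneg (a : ℝ)]

lemma isBigO_sigmaC_sub {r : ℂ} (hr : 0 ≤ r.re) {ε : ℝ} (hε : 0 < ε) (a : ℤ) :
    (fun m : ℤ => sigmaC (-r) (a - m)) =O[cofinite] fun m : ℤ => |(m : ℝ)| ^ ε :=
  ((isBigO_sigmaC hr hε).comp_tendsto (sub_right_injective.tendsto_cofinite)).trans
    ((isBigO_intCast_sub a).abs_abs.rpow hε.le (Eventually.of_forall fun _ => abs_nonneg _))

theorem Q_bound_and_absolute_summability_general
    (n : ℕ) (k : ℕ)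
    (r1 r2 d : ℂ)
    (hr1 : 0 ≤ r1.re) (hr2 : 0 ≤ r2.re) (hd : 0 < d.re) :
    (∃ C > (0:ℝ), ∀ n1 : ℤ, n1 ≠ 0 → n1 ≠ (n : ℤ) →
        ‖Q k r1 r2 d n n1‖ ≤ C * (|(n1 : ℝ)|) ^ (-d.re - 1)) ∧
      Summable (fun m : {m : ℤ // m ≠ 0 ∧ m ≠ (n : ℤ)} =>
        ‖Q k r1 r2 d n m.1 * sigmaC (-r1) m.1 * sigmaC (-r2) ((n : ℤ) - m.1)‖) := by
  have hQ := isBigO_Q (r1 := r1) (r2 := r2) (d := d) (by simp only [Complex.add_re]; linarith)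
    (by simp only [Complex.add_re]; linarith) (by linarith) k n
  constructor
  · obtain ⟨C, hC0, hC⟩ := bound_of_isBigO_cofinite hQ
    refine ⟨C, hC0, fun n1 hn1 _ => ?_⟩
    have hpos : 0 < |(n1 : ℝ)| ^ (-d.re - 1) :=
      Real.rpow_pos_of_pos (abs_pos.2 (Int.cast_ne_zero.2 hn1)) _
    simpa [Real.norm_of_nonneg hpos.le] using hC hpos.ne'
  · have hε : 0 < d.re / 4 := by linarith
    have hterm := (hQ.mul (isBigO_sigmaC hr1 hε)).mul (isBigO_sigmaC_sub hr2 hε n)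
    have hsum : Summable fun m : ℤ =>
        |(m : ℝ)| ^ (-d.re - 1) * |(m : ℝ)| ^ (d.re / 4) * |(m : ℝ)| ^ (d.re / 4) := by
      refine (Real.summable_abs_int_rpow (b := 1 + d.re / 2) (by linarith)).congr fun m => ?_
      rw [← Real.rpow_add' (abs_nonneg _) (by linarith),
        ← Real.rpow_add' (abs_nonneg _) (by linarith)]
      ring_nf
    exact (summable_of_isBigO hsum hterm.norm_left).subtype _

/-- Uniform bound `|Q(n1, n−n1)| ≤ C·|n1|^{−Re(d)−1}`, and consequently absolute summability of
the convolution family. -/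
theorem Q_bound_and_absolute_summability
    (n : ℕ) (hn : 0 < n) (k : ℕ) (hke : Even k) (hk6 : 6 ≤ k)
    (r1 r2 d : ℂ) (hsum : r1 + r2 + 2 * d + 2 = (k : ℂ))
    (hr1 : 0 ≤ r1.re) (hr2 : 0 ≤ r2.re) (hd : 0 < d.re) :
    (∃ C > (0:ℝ), ∀ n1 : ℤ, n1 ≠ 0 → n1 ≠ (n : ℤ) →
        ‖Q k r1 r2 d n n1‖ ≤ C * (|(n1 : ℝ)|) ^ (-d.re - 1)) ∧
      Summable (fun m : {m : ℤ // m ≠ 0 ∧ m ≠ (n : ℤ)} =>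
        ‖Q k r1 r2 d n m.1 * sigmaC (-r1) m.1 * sigmaC (-r2) ((n : ℤ) - m.1)‖) :=
  Q_bound_and_absolute_summability_general n k r1 r2 d hr1 hr2 hd
end
end

section
/- For every integer n ≥ 1, the following identity of rational numbers holds: Σ_{n1=1}^{n−1} (10 − 55·(n1/n) + 66·(n1/n)²) · σ_3(n1) · σ_5(n−n1) = (σ_3(n) − σ_5(n))/24. -/
/-!
After multiplying by `n²`, the left side is the sum of a polynomial weight `W(a, b, x, y)` over
the quadruples of positive integers with `a x + b y = n` (with `n₁ = a x`, `n - n₁ = b y`).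
Such sums are evaluated by Liouville's method: `(a, b, x, y) ↦ (a - b, b, x, x + y)` maps the
quadruples with `b < a` onto those with `x < y`, and its mirror image under
`(a, b, x, y) ↦ (b, a, y, x)` maps those with `a < b` onto those with `y < x`. If the symmetrized
weight is `h ∘ φ - h` along both maps for a polynomial `h` vanishing at `x = y`, the off-diagonal
sums telescope and only the quadruples with `a = b` survive. There `a (x + y) = n`, and the
power-sum formulas give `∑_{x + y = m} (W + h)(d, d, x, y) = d² (m⁵ - m⁷) / 24`, which sums over
`d m = n` to `n² (σ₃(n) - σ₅(n)) / 24`.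
-/

/-- Divisor power sum `σ_a(m) = ∑_{d ∣ m, d > 0} d^a`. -/
def sig (a m : ℕ) : ℕ := ∑ d ∈ m.divisors, d ^ a

open Finset

def quadruples (n : ℕ) : Finset (ℕ × ℕ × ℕ × ℕ) :=
  {p ∈ Icc 1 n ×ˢ Icc 1 n ×ˢ Icc 1 n ×ˢ Icc 1 n | p.1 * p.2.2.1 + p.2.1 * p.2.2.2 = n}

@[simp]
lemma mem_quadruples {n a b x y : ℕ} :
    (a, b, x, y) ∈ quadruples n ↔ 0 < a ∧ 0 < b ∧ 0 < x ∧ 0 < y ∧ a * x + b * y = n := by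
  simp only [quadruples, mem_filter, mem_product, mem_Icc]
  constructor
  · rintro ⟨⟨⟨ha, -⟩, ⟨hb, -⟩, ⟨hx, -⟩, hy, -⟩, he⟩
    exact ⟨ha, hb, hx, hy, he⟩
  · rintro ⟨ha, hb, hx, hy, rfl⟩
    refine ⟨⟨⟨ha, ?_⟩, ⟨hb, ?_⟩, ⟨hx, ?_⟩, hy, ?_⟩, rfl⟩ <;> nlinarith

def quadSwap : ℕ × ℕ × ℕ × ℕ ≃ ℕ × ℕ × ℕ × ℕ where
  toFun p := (p.2.1, p.1, p.2.2.2, p.2.2.1)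
  invFun p := (p.2.1, p.1, p.2.2.2, p.2.2.1)
  left_inv _ := rfl
  right_inv _ := rfl

lemma quadSwap_mem_quadruples {n : ℕ} {p : ℕ × ℕ × ℕ × ℕ} :
    quadSwap p ∈ quadruples n ↔ p ∈ quadruples n := by
  obtain ⟨a, b, x, y⟩ := p
  simp only [quadSwap, Equiv.coe_fn_mk, mem_quadruples]
  constructor <;> rintro ⟨h₁, h₂, h₃, h₄, rfl⟩ <;> exact ⟨h₂, h₁, h₄, h₃, add_comm _ _⟩

lemma sum_quadruples_comp_quadSwap {M : Type*} [AddCommMonoid M] (n : ℕ)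
    (P : ℕ × ℕ × ℕ × ℕ → Prop) [DecidablePred P] (f : ℕ × ℕ × ℕ × ℕ → M) :
    ∑ p ∈ quadruples n with P (quadSwap p), f (quadSwap p) = ∑ p ∈ quadruples n with P p, f p :=
  sum_equiv quadSwap (fun _ => by simp only [mem_filter, quadSwap_mem_quadruples])
    fun _ _ => rfl

lemma sum_eq_sum_filter_lt_add_sum_filter_eq_add_sum_filter_gt {ι α M : Type*}
    [LinearOrder α] [AddCommMonoid M] (s : Finset ι) (u v : ι → α) (f : ι → M) :
    ∑ i ∈ s, f i = ∑ i ∈ s with u i < v i, f i + ∑ i ∈ s with u i = v i, f i +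
      ∑ i ∈ s with v i < u i, f i := by
  rw [← sum_filter_add_sum_filter_not s (fun i => u i < v i),
    ← sum_filter_add_sum_filter_not (s.filter fun i => ¬u i < v i) (fun i => u i = v i),
    filter_filter, filter_filter, add_assoc]
  congr 3
  · exact filter_congr fun i _ => ⟨And.right, fun h => ⟨h.not_lt, h⟩⟩
  · refine filter_congr fun i _ => ?_
    push Not
    exact ⟨fun h => h.1.lt_of_ne h.2.symm, fun h => ⟨h.le, h.ne'⟩⟩

lemma sum_filter_snd_lt_fst {M : Type*} [AddCommMonoid M] (n : ℕ) (f : ℕ × ℕ × ℕ × ℕ → M) :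
    ∑ p ∈ quadruples n with p.2.1 < p.1, f p =
      ∑ p ∈ quadruples n with p.2.2.1 < p.2.2.2,
        f (p.1 + p.2.1, p.2.1, p.2.2.1, p.2.2.2 - p.2.2.1) := by
  symm
  refine sum_nbij' (fun p => (p.1 + p.2.1, p.2.1, p.2.2.1, p.2.2.2 - p.2.2.1))
    (fun p => (p.1 - p.2.1, p.2.1, p.2.2.1, p.2.2.1 + p.2.2.2)) ?_ ?_ ?_ ?_ fun _ _ => rfl
  · rintro ⟨a, b, x, y⟩ hp
    simp only [mem_filter, mem_quadruples] at hp ⊢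
    obtain ⟨⟨ha, hb, hx, hy, rfl⟩, hxy⟩ := hp
    obtain ⟨c, rfl⟩ := Nat.exists_eq_add_of_lt hxy
    refine ⟨⟨by omega, hb, hx, by omega, ?_⟩, by omega⟩
    rw [show x + c + 1 - x = c + 1 by omega]
    ring
  · rintro ⟨a, b, x, y⟩ hp
    simp only [mem_filter, mem_quadruples] at hp ⊢
    obtain ⟨⟨ha, hb, hx, hy, rfl⟩, hba⟩ := hp
    obtain ⟨c, rfl⟩ := Nat.exists_eq_add_of_lt hba
    refine ⟨⟨by omega, hb, hx, by omega, ?_⟩, by omega⟩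
    rw [show b + c + 1 - b = c + 1 by omega]
    ring
  all_goals
    rintro ⟨a, b, x, y⟩ hp
    simp only [mem_filter, mem_quadruples] at hp
    simp only [Prod.mk.injEq, true_and]
    omega

section Liouville

variable {M : Type*} [AddCommGroup M] (h T : ℕ × ℕ × ℕ × ℕ → M)

lemma sum_filter_snd_lt_fst_eq_sub (n : ℕ)
    (hT : ∀ a b x y, h (a, b, x, x + y) - h (a + b, b, x, y) = T (a + b, b, x, y)) :
    ∑ p ∈ quadruples n with p.2.1 < p.1, T p =
      ∑ p ∈ quadruples n with p.2.2.1 < p.2.2.2, h p -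
        ∑ p ∈ quadruples n with p.2.1 < p.1, h p := by
  rw [sum_filter_snd_lt_fst n T, sum_filter_snd_lt_fst n h, ← sum_sub_distrib]
  refine sum_congr rfl fun ⟨a, b, x, y⟩ hp => ?_
  have hxy : x < y := (mem_filter.1 hp).2
  dsimp only
  rw [← hT, Nat.add_sub_cancel' hxy.le]

theorem sum_quadruples_eq_sum_filter_fst_eq_snd (n : ℕ)
    (hT₁ : ∀ a b x y, h (a, b, x, x + y) - h (a + b, b, x, y) = T (a + b, b, x, y))
    (hT₂ : ∀ a b x y, h (a, b, y + x, y) - h (a, b + a, x, y) = T (a, b + a, x, y))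
    (hdiag : ∀ a b x, h (a, b, x, x) = 0) :
    ∑ p ∈ quadruples n, T p = ∑ p ∈ quadruples n with p.1 = p.2.1, (T p + h p) := by
  have hT := sum_eq_sum_filter_lt_add_sum_filter_eq_add_sum_filter_gt (quadruples n)
    (fun p => p.1) (fun p => p.2.1) T
  have hab := sum_eq_sum_filter_lt_add_sum_filter_eq_add_sum_filter_gt (quadruples n)
    (fun p => p.1) (fun p => p.2.1) h
  have hxy := sum_eq_sum_filter_lt_add_sum_filter_eq_add_sum_filter_gt (quadruples n)
    (fun p => p.2.2.1) (fun p => p.2.2.2) h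
  have hx_eq_y : ∑ p ∈ quadruples n with p.2.2.1 = p.2.2.2, h p = 0 :=
    sum_eq_zero fun ⟨a, b, x, y⟩ hp => by
      obtain rfl : x = y := (mem_filter.1 hp).2
      exact hdiag a b x
  have hb_lt_a := sum_filter_snd_lt_fst_eq_sub h T n hT₁
  have ha_lt_b : ∑ p ∈ quadruples n with p.1 < p.2.1, T p =
      ∑ p ∈ quadruples n with p.2.2.2 < p.2.2.1, h p -
        ∑ p ∈ quadruples n with p.1 < p.2.1, h p := by
    rw [← sum_quadruples_comp_quadSwap n (fun p => p.1 < p.2.1),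
      ← sum_quadruples_comp_quadSwap n (fun p => p.2.2.2 < p.2.2.1),
      ← sum_quadruples_comp_quadSwap n (fun p => p.1 < p.2.1) h]
    exact sum_filter_snd_lt_fst_eq_sub (h ∘ quadSwap) (T ∘ quadSwap) n
      fun a b x y => hT₂ b a y x
  rw [sum_add_distrib, hT, hb_lt_a, ha_lt_b]
  linear_combination (norm := abel) hab - hxy - hx_eq_y

end Liouville

lemma sum_filter_fst_eq_snd_eq_sum_divisorsAntidiagonal {M : Type*} [AddCommMonoid M]
    (n : ℕ) (g : ℕ × ℕ × ℕ × ℕ → M) :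
    ∑ p ∈ quadruples n with p.1 = p.2.1, g p =
      ∑ q ∈ n.divisorsAntidiagonal, ∑ x ∈ Ico 1 q.2, g (q.1, q.1, x, q.2 - x) := by
  rw [sum_sigma']
  symm
  refine sum_nbij' (fun q => (q.1.1, q.1.1, q.2, q.1.2 - q.2))
    (fun p => ⟨(p.1, p.2.2.1 + p.2.2.2), p.2.2.1⟩) ?_ ?_ ?_ ?_ fun _ _ => rfl
  · rintro ⟨⟨d, m⟩, x⟩ hq
    simp only [mem_sigma, Nat.mem_divisorsAntidiagonal, mem_Ico] at hq
    obtain ⟨⟨rfl, hdm⟩, hx, hxm⟩ := hq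
    have hd : 0 < d := Nat.pos_of_ne_zero (left_ne_zero_of_mul hdm)
    simp only [mem_filter, mem_quadruples, and_true]
    refine ⟨hd, hd, hx, by omega, ?_⟩
    rw [← mul_add, Nat.add_sub_cancel' hxm.le]
  · rintro ⟨a, b, x, y⟩ hp
    simp only [mem_filter, mem_quadruples] at hp
    obtain ⟨⟨ha, -, hx, hy, rfl⟩, rfl⟩ := hp
    simp only [mem_sigma, Nat.mem_divisorsAntidiagonal, mem_Ico]
    exact ⟨⟨by ring, by positivity⟩, hx, by omega⟩
  · rintro ⟨⟨d, m⟩, x⟩ hq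
    simp only [mem_sigma, mem_Ico] at hq
    simp only [Nat.add_sub_cancel' hq.2.2.le]
  · rintro ⟨a, b, x, y⟩ hp
    simp only [mem_filter, mem_quadruples] at hp
    obtain ⟨-, rfl⟩ := hp
    simp only [Nat.add_sub_cancel_left]

lemma sum_Ico_sum_divisorsAntidiagonal_product {M : Type*} [AddCommMonoid M] (n : ℕ)
    (F : ℕ × ℕ × ℕ × ℕ → M) :
    ∑ k ∈ Ico 1 n, ∑ q ∈ k.divisorsAntidiagonal ×ˢ (n - k).divisorsAntidiagonal,
        F (q.1.1, q.2.1, q.1.2, q.2.2) = ∑ p ∈ quadruples n, F p := by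
  rw [sum_sigma']
  refine sum_nbij' (fun q => (q.2.1.1, q.2.2.1, q.2.1.2, q.2.2.2))
    (fun p => ⟨p.1 * p.2.2.1, (p.1, p.2.2.1), (p.2.1, p.2.2.2)⟩) ?_ ?_ ?_ ?_ fun _ _ => rfl
  · rintro ⟨k, ⟨a, x⟩, ⟨b, y⟩⟩ hq
    simp only [mem_sigma, mem_product, Nat.mem_divisorsAntidiagonal, mem_Ico] at hq
    obtain ⟨⟨-, hkn⟩, ⟨rfl, hax⟩, ⟨hby, hby0⟩⟩ := hq
    simp only [mem_quadruples]
    refine ⟨Nat.pos_of_ne_zero (left_ne_zero_of_mul hax), Nat.pos_of_ne_zero ?_,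
      Nat.pos_of_ne_zero (right_ne_zero_of_mul hax), Nat.pos_of_ne_zero ?_, by omega⟩
    exacts [left_ne_zero_of_mul (hby ▸ hby0), right_ne_zero_of_mul (hby ▸ hby0)]
  · rintro ⟨a, b, x, y⟩ hp
    simp only [mem_quadruples] at hp
    obtain ⟨ha, hb, hx, hy, rfl⟩ := hp
    have hax : 0 < a * x := by positivity
    have hby : 0 < b * y := by positivity
    simp only [mem_sigma, mem_product, Nat.mem_divisorsAntidiagonal, mem_Ico, true_and]
    omega
  · rintro ⟨k, ⟨a, x⟩, ⟨b, y⟩⟩ hq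
    simp only [mem_sigma, mem_product, Nat.mem_divisorsAntidiagonal] at hq
    simp only [hq.2.1.1]
  · intro p _
    rfl

lemma sig_eq_sum_divisorsAntidiagonal {R : Type*} [CommSemiring R] (k m : ℕ) :
    (sig k m : R) = ∑ q ∈ m.divisorsAntidiagonal, (q.2 : R) ^ k := by
  rw [Nat.sum_divisorsAntidiagonal' fun _ d => (d : R) ^ k, sig]
  push_cast
  rfl

/-- `n²` times the weight of the theorem at `n₁ = a x`, `n = a x + b y`, times the term `x³ y⁵`
of `σ₃(n₁) σ₅(n - n₁)` indexed by the factorizations `(a, x)` and `(b, y)`. -/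
def convolutionWeight : ℕ × ℕ × ℕ × ℕ → ℚ
  | (a, b, x, y) =>
    (10 * ((a * x + b * y : ℕ) : ℚ) ^ 2 - 55 * (a * x + b * y : ℕ) * (a * x : ℕ) +
      66 * ((a * x : ℕ) : ℚ) ^ 2) * (x : ℚ) ^ 3 * (y : ℚ) ^ 5

def symmetrizedWeight (p : ℕ × ℕ × ℕ × ℕ) : ℚ :=
  (convolutionWeight p + convolutionWeight (quadSwap p)) / 2

/-- Found by solving the two difference equations of `sum_quadruples_eq_sum_filter_fst_eq_snd`
for `T = symmetrizedWeight`, as an unknown polynomial of degree 2 in `a, b` and 10 in `x, y`. -/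
def telescoper : ℕ × ℕ × ℕ × ℕ → ℚ
  | (a, b, x, y) =>
    (b : ℚ) ^ 2 * (3/8 * x^2 * y^8 - 5/2 * x^3 * y^7 + 45/8 * x^4 * y^6 - 21/4 * x^5 * y^5
        + 7/4 * x^6 * y^4) +
      a * b * (-2 * x^3 * y^7 + 35/4 * x^4 * y^6 - 27/2 * x^5 * y^5 + 35/4 * x^6 * y^4
        - 2 * x^7 * y^3) +
      a ^ 2 * (3/8 * y^2 * x^8 - 5/2 * y^3 * x^7 + 45/8 * y^4 * x^6 - 21/4 * y^5 * x^5
        + 7/4 * y^6 * x^4)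

lemma telescoper_shift_fst (a b x y : ℕ) :
    telescoper (a, b, x, x + y) - telescoper (a + b, b, x, y) =
      symmetrizedWeight (a + b, b, x, y) := by
  simp only [telescoper, symmetrizedWeight, convolutionWeight, quadSwap, Equiv.coe_fn_mk]
  push_cast
  ring

lemma telescoper_shift_snd (a b x y : ℕ) :
    telescoper (a, b, y + x, y) - telescoper (a, b + a, x, y) =
      symmetrizedWeight (a, b + a, x, y) := by
  simp only [telescoper, symmetrizedWeight, convolutionWeight, quadSwap, Equiv.coe_fn_mk]
  push_cast
  ring

lemma telescoper_diag (a b x : ℕ) : telescoper (a, b, x, x) = 0 := by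
  simp only [telescoper]
  ring

lemma sum_range_cast_pow_two (m : ℕ) :
    ∑ x ∈ range m, (x : ℚ) ^ 2 = m / 6 - m ^ 2 / 2 + m ^ 3 / 3 := by
  induction m with
  | zero => simp
  | succ m ih => rw [sum_range_succ, ih]; push_cast; ring

lemma sum_range_cast_pow_three (m : ℕ) :
    ∑ x ∈ range m, (x : ℚ) ^ 3 = m ^ 2 / 4 - m ^ 3 / 2 + m ^ 4 / 4 := by
  induction m with
  | zero => simp
  | succ m ih => rw [sum_range_succ, ih]; push_cast; ring

lemma sum_range_cast_pow_four (m : ℕ) :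
    ∑ x ∈ range m, (x : ℚ) ^ 4 = -m / 30 + m ^ 3 / 3 - m ^ 4 / 2 + m ^ 5 / 5 := by
  induction m with
  | zero => simp
  | succ m ih => rw [sum_range_succ, ih]; push_cast; ring

lemma sum_range_cast_pow_five (m : ℕ) :
    ∑ x ∈ range m, (x : ℚ) ^ 5 = -m ^ 2 / 12 + 5 * m ^ 4 / 12 - m ^ 5 / 2 + m ^ 6 / 6 := by
  induction m with
  | zero => simp
  | succ m ih => rw [sum_range_succ, ih]; push_cast; ring

lemma sum_range_cast_pow_six (m : ℕ) :
    ∑ x ∈ range m, (x : ℚ) ^ 6 =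
      m / 42 - m ^ 3 / 6 + m ^ 5 / 2 - m ^ 6 / 2 + m ^ 7 / 7 := by
  induction m with
  | zero => simp
  | succ m ih => rw [sum_range_succ, ih]; push_cast; ring

lemma sum_Ico_symmetrizedWeight_add_telescoper (d m : ℕ) :
    ∑ x ∈ Ico 1 m, (symmetrizedWeight (d, d, x, m - x) + telescoper (d, d, x, m - x)) =
      (d : ℚ) ^ 2 * ((m : ℚ) ^ 5 - (m : ℚ) ^ 7) / 24 := by
  have hpoly : ∀ x ∈ range m,
      symmetrizedWeight (d, d, x, m - x) + telescoper (d, d, x, m - x) =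
        (d : ℚ) ^ 2 * (3/8 * m^8 * (x : ℚ)^2 - 5/2 * m^7 * (x : ℚ)^3 + 45/8 * m^6 * (x : ℚ)^4
          - 21/4 * m^5 * (x : ℚ)^5 + 7/4 * m^4 * (x : ℚ)^6) := by
    intro x hx
    simp only [telescoper, symmetrizedWeight, convolutionWeight, quadSwap, Equiv.coe_fn_mk]
    push_cast [(mem_range.1 hx).le]
    ring
  rcases Nat.eq_zero_or_pos m with rfl | hm
  · simp
  have hzero : symmetrizedWeight (d, d, 0, m - 0) + telescoper (d, d, 0, m - 0) = 0 := by
    simpa using hpoly 0 (mem_range.2 hm)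
  rw [← zero_add (∑ x ∈ Ico 1 m, _), ← hzero,
    ← sum_range_eq_add_Ico
      (fun x => symmetrizedWeight (d, d, x, m - x) + telescoper (d, d, x, m - x)) hm,
    sum_congr rfl hpoly]
  simp only [← mul_sum, sum_add_distrib, sum_sub_distrib]
  rw [sum_range_cast_pow_two, sum_range_cast_pow_three, sum_range_cast_pow_four,
    sum_range_cast_pow_five, sum_range_cast_pow_six]
  ring

lemma sum_Ico_mul_sig_mul_sig_eq_sum_quadruples (n : ℕ) :
    ∑ k ∈ Ico 1 n, (10 * (n : ℚ) ^ 2 - 55 * n * k + 66 * (k : ℚ) ^ 2) *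
        (sig 3 k : ℚ) * (sig 5 (n - k) : ℚ) = ∑ p ∈ quadruples n, convolutionWeight p := by
  rw [← sum_Ico_sum_divisorsAntidiagonal_product]
  refine sum_congr rfl fun k hk => ?_
  rw [sig_eq_sum_divisorsAntidiagonal, sig_eq_sum_divisorsAntidiagonal, mul_assoc, sum_mul_sum,
    ← sum_product', mul_sum]
  refine sum_congr rfl fun ⟨⟨a, x⟩, ⟨b, y⟩⟩ hq => ?_
  simp only [mem_product, Nat.mem_divisorsAntidiagonal] at hq
  simp only [convolutionWeight, hq.1.1, hq.2.1, Nat.add_sub_cancel' (mem_Ico.1 hk).2.le]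
  ring

lemma sum_quadruples_convolutionWeight (n : ℕ) :
    ∑ p ∈ quadruples n, convolutionWeight p =
      (n : ℚ) ^ 2 * ((sig 3 n : ℚ) - sig 5 n) / 24 := by
  have hsymm : ∑ p ∈ quadruples n, convolutionWeight p =
      ∑ p ∈ quadruples n, symmetrizedWeight p := by
    have hswap : ∑ p ∈ quadruples n, convolutionWeight (quadSwap p) =
        ∑ p ∈ quadruples n, convolutionWeight p :=
      sum_equiv quadSwap (fun _ => quadSwap_mem_quadruples.symm) fun _ _ => rfl
    simp only [symmetrizedWeight, ← sum_div, sum_add_distrib, hswap]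
    ring
  rw [hsymm, sum_quadruples_eq_sum_filter_fst_eq_snd telescoper symmetrizedWeight n
      telescoper_shift_fst telescoper_shift_snd telescoper_diag,
    sum_filter_fst_eq_snd_eq_sum_divisorsAntidiagonal]
  simp only [sum_Ico_symmetrizedWeight_add_telescoper]
  rw [sig_eq_sum_divisorsAntidiagonal, sig_eq_sum_divisorsAntidiagonal, ← sum_sub_distrib,
    mul_sum, sum_div]
  refine sum_congr rfl fun q hq => ?_
  have hdm : (q.1 : ℚ) * q.2 = n := by exact_mod_cast (Nat.mem_divisorsAntidiagonal.1 hq).1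
  rw [← hdm]
  ring

theorem convolution_identity_r1_3_r2_5_d_2 (n : ℕ) (hn : 1 ≤ n) :
    ∑ n1 ∈ Finset.Ico 1 n,
        ((10 : ℚ) - 55 * ((n1 : ℚ) / (n : ℚ)) + 66 * ((n1 : ℚ) / (n : ℚ)) ^ 2) *
          (sig 3 n1 : ℚ) * (sig 5 (n - n1) : ℚ) =
      ((sig 3 n : ℚ) - (sig 5 n : ℚ)) / 24 := by
  have hn0 : (n : ℚ) ≠ 0 := Nat.cast_ne_zero.2 (Nat.one_le_iff_ne_zero.1 hn)
  calc _ = (∑ k ∈ Ico 1 n, (10 * (n : ℚ) ^ 2 - 55 * n * k + 66 * (k : ℚ) ^ 2) *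
          (sig 3 k : ℚ) * (sig 5 (n - k) : ℚ)) / (n : ℚ) ^ 2 := by
        rw [sum_div]
        refine sum_congr rfl fun k _ => ?_
        field_simp
    _ = _ := by
        rw [sum_Ico_mul_sig_mul_sig_eq_sum_quadruples, sum_quadruples_convolutionWeight]
        field_simp
end

section
/- Let r1, r2 be odd integers with r1 > 1 and r2 > 1, let d be a negative integer, and let n ∈ ℕ. Then, as ε → 0 through nonzero complex values, the quantity Γ(1 + d − ε) · [ (2π)^{r2+ε}·ζ(1 − r2 − ε)/(Γ(1 + d + r1 + r2 + ε)·Γ(1 + d + r2)) + ζ(1 + r2 + ε)·n^{−r2−ε}/((2π)^{r2+ε}·Γ(1 + d − ε)·Γ(1 + d + r1)) ] (which equals Γ(1 + d − ε)·Z^{(r1+ε, r2+ε)}_{d−ε}) converges to (−1)^{d+1}·(2π)^{r2}·ζ'(1 − r2)/(Γ(1 + d + r2)·Γ(1 + d + r1 + r2)·Γ(−d)) + (2π)^{−r2}·ζ(1 + r2)·n^{−r2}/Γ(1 + d + r1), where ζ' denotes the derivative of the Riemann zeta function. -/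
/-!
Since `d < 0`, `Γ(1 + d - ε)` has a simple pole at `ε = 0`, with
`-ε Γ(1 + d - ε) → (-1)^(d+1) / Γ(-d)`. In the first summand it meets the trivial zero
`ζ(1 - r₂) = 0` (`r₂ ≥ 3` odd), so the product tends to the residue times `ζ'(1 - r₂)`; in the
second summand the same Gamma factor cancels outright. All remaining factors are continuous at
`ε = 0`, the reciprocal Gamma function being entire.
-/

open Real Filter Topology

noncomputable section

open Complex Nat in
theorem Complex.tendsto_self_mul_Gamma_sub_nat (k : ℕ) :
    Tendsto (fun z : ℂ => z * Gamma (z - k)) (𝓝[≠] 0) (𝓝 ((-1) ^ k / k !)) := by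
  induction k with
  | zero => simpa using tendsto_self_mul_Gamma_nhds_zero
  | succ k ih =>
    have hden : Tendsto (fun z : ℂ => z - (k + 1)) (𝓝[≠] 0) (𝓝 (-(k + 1))) := by
      simpa using ((continuous_sub_right ((k : ℂ) + 1)).tendsto 0).mono_left nhdsWithin_le_nhds
    refine ((ih.div hden (by norm_cast)).congr' ?_).trans_eq ?_
    · filter_upwards [eventually_nhdsWithin_of_eventually_nhds (eventually_ne_nhds
        (show (0 : ℂ) ≠ k + 1 by norm_cast))] with z hz
      have hrec := Gamma_add_one (z - (k + 1)) (sub_ne_zero.2 hz)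
      rw [show z - (k + 1) + 1 = z - k by ring] at hrec
      rw [Pi.div_apply, hrec, Nat.cast_succ, mul_left_comm,
        mul_div_cancel_left₀ _ (sub_ne_zero.2 hz)]
    · rw [Nat.factorial_succ, pow_succ]
      push_cast
      congr 1
      field_simp

theorem Complex.continuous_inv_Gamma : Continuous fun s : ℂ => (Gamma s)⁻¹ :=
  differentiable_one_div_Gamma.continuous

theorem tendsto_neg_nhdsNE_zero {𝕜 : Type*} [NontriviallyNormedField 𝕜] :
    Tendsto (fun t : 𝕜 => -t) (𝓝[≠] 0) (𝓝[≠] 0) := by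
  simpa using (hasDerivAt_neg (0 : 𝕜)).tendsto_nhdsNE (neg_ne_zero.2 one_ne_zero)

theorem HasDerivAt.tendsto_div_of_eq_zero {𝕜 : Type*} [NontriviallyNormedField 𝕜] {f : 𝕜 → 𝕜}
    {f' a : 𝕜} (hf : HasDerivAt f f' a) (ha : f a = 0) :
    Tendsto (fun t => f (a + t) / t) (𝓝[≠] 0) (𝓝 f') := by
  simpa [ha, div_eq_inv_mul] using hasDerivAt_iff_tendsto_slope_zero.1 hf

theorem riemannZeta_one_sub_eq_zero_of_odd {r : ℤ} (hodd : Odd r) (hr : 1 < r) :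
    riemannZeta (1 - r) = 0 := by
  obtain ⟨m, rfl⟩ : ∃ m : ℕ, r = 2 * m + 3 := by
    obtain ⟨k, rfl⟩ := hodd
    exact ⟨(k - 1).toNat, by omega⟩
  convert riemannZeta_neg_two_mul_nat_add_one m using 2
  push_cast; ring

theorem tendsto_neg_mul_Gamma_one_add_sub {d : ℤ} (hd : d < 0) :
    Tendsto (fun ε : ℂ => -ε * Complex.Gamma (1 + d - ε)) (𝓝[≠] 0)
      (𝓝 ((-1) ^ (d + 1) / Complex.Gamma (-d))) := by
  obtain ⟨k, rfl⟩ : ∃ k : ℕ, d = -(k + 1) := ⟨(-d - 1).toNat, by omega⟩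
  convert (Complex.tendsto_self_mul_Gamma_sub_nat k).comp tendsto_neg_nhdsNE_zero using 2 with ε
  · simp only [Function.comp_apply]; push_cast; ring_nf
  · push_cast
    rw [neg_neg, Complex.Gamma_nat_eq_factorial, show -((k : ℤ) + 1) + 1 = -k by ring, zpow_neg,
      zpow_natCast, ← inv_pow, inv_neg, inv_one]

theorem eventually_Gamma_one_add_sub_ne_zero {d : ℤ} (hd : d < 0) :
    ∀ᶠ ε : ℂ in 𝓝[≠] 0, Complex.Gamma (1 + d - ε) ≠ 0 := by
  have hres : (-1 : ℂ) ^ (d + 1) / Complex.Gamma (-d) ≠ 0 :=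
    div_ne_zero (zpow_ne_zero _ (by norm_num))
      (Complex.Gamma_ne_zero_of_re_pos (by simp; exact_mod_cast hd))
  exact ((tendsto_neg_mul_Gamma_one_add_sub hd).eventually_ne hres).mono
    fun _ => right_ne_zero_of_mul

theorem tendsto_riemannZeta_one_sub_sub_div_neg {r : ℤ} (hodd : Odd r) (hr : 1 < r) :
    Tendsto (fun ε : ℂ => riemannZeta (1 - r - ε) / -ε) (𝓝[≠] 0)
      (𝓝 (deriv riemannZeta (1 - r))) := by
  have hr1 : (1 : ℂ) - r ≠ 1 := by simpa using (by omega : r ≠ 0)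
  have hζ := (differentiableAt_riemannZeta hr1).hasDerivAt.tendsto_div_of_eq_zero
    (riemannZeta_one_sub_eq_zero_of_odd hodd hr)
  simpa only [Function.comp_def, ← sub_eq_add_neg] using hζ.comp tendsto_neg_nhdsNE_zero

theorem tendsto_Gamma_mul_trivial_zero_term (r1 r2 : ℤ) (ho2 : Odd r2) (hr2 : 1 < r2)
    (d : ℤ) (hd : d < 0) :
    Tendsto (fun ε : ℂ =>
        Complex.Gamma (1 + (d : ℂ) - ε) *
          ((2 * (π : ℂ)) ^ ((r2 : ℂ) + ε) * riemannZeta (1 - (r2 : ℂ) - ε) /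
            (Complex.Gamma (1 + (d : ℂ) + (r1 : ℂ) + (r2 : ℂ) + ε) *
              Complex.Gamma (1 + (d : ℂ) + (r2 : ℂ)))))
      (𝓝[≠] 0)
      (𝓝 ((-1 : ℂ) ^ (d + 1) * (2 * (π : ℂ)) ^ (r2 : ℤ) * deriv riemannZeta (1 - (r2 : ℂ)) /
            (Complex.Gamma (1 + (d : ℂ) + (r2 : ℂ)) *
              Complex.Gamma (1 + (d : ℂ) + (r1 : ℂ) + (r2 : ℂ)) *
              Complex.Gamma (-(d : ℂ))))) := by
  have h2π : (2 * (π : ℂ)) ≠ 0 := by simp [pi_ne_zero]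
  have hrest : Continuous fun ε : ℂ => (2 * (π : ℂ)) ^ ((r2 : ℂ) + ε) *
      (Complex.Gamma (1 + d + r1 + r2 + ε))⁻¹ * (Complex.Gamma (1 + d + r2))⁻¹ :=
    (((continuous_const.add continuous_id).const_cpow (Or.inl h2π)).mul
      (Complex.continuous_inv_Gamma.comp (by fun_prop))).mul continuous_const
  have hlim := ((tendsto_neg_mul_Gamma_one_add_sub hd).mul
    (tendsto_riemannZeta_one_sub_sub_div_neg ho2 hr2)).mul
    ((hrest.tendsto' 0 _ rfl).mono_left nhdsWithin_le_nhds)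
  refine (hlim.congr' ?_).trans_eq ?_
  · filter_upwards [self_mem_nhdsWithin] with ε (hε : ε ≠ 0)
    field_simp
  · simp only [add_zero, Complex.cpow_intCast, div_eq_mul_inv, mul_inv]
    congr 1
    ring

theorem tendsto_Gamma_mul_cancelled_Gamma_term (r1 r2 : ℤ) (hr2 : 1 < r2) (d : ℤ) (hd : d < 0)
    (n : ℕ) (hn : 0 < n) :
    Tendsto (fun ε : ℂ =>
        Complex.Gamma (1 + (d : ℂ) - ε) *
          (riemannZeta (1 + (r2 : ℂ) + ε) * (n : ℂ) ^ (-(r2 : ℂ) - ε) /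
            ((2 * (π : ℂ)) ^ ((r2 : ℂ) + ε) * Complex.Gamma (1 + (d : ℂ) - ε) *
              Complex.Gamma (1 + (d : ℂ) + (r1 : ℂ)))))
      (𝓝[≠] 0)
      (𝓝 ((2 * (π : ℂ)) ^ (-r2 : ℤ) * riemannZeta (1 + (r2 : ℂ)) * (n : ℂ) ^ (-r2 : ℤ) /
            Complex.Gamma (1 + (d : ℂ) + (r1 : ℂ)))) := by
  have h2π : (2 * (π : ℂ)) ≠ 0 := by simp [pi_ne_zero]
  have hn0 : (n : ℂ) ≠ 0 := by exact_mod_cast hn.ne'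
  have hcont : ContinuousAt (fun ε : ℂ => riemannZeta (1 + r2 + ε) * (n : ℂ) ^ (-(r2 : ℂ) - ε) *
      (2 * (π : ℂ)) ^ (-(r2 : ℂ) - ε) * (Complex.Gamma (1 + d + r1))⁻¹) 0 := by
    have hζ : ContinuousAt (fun ε : ℂ => riemannZeta (1 + r2 + ε)) 0 :=
      (differentiableAt_riemannZeta (by simpa using (by omega : r2 ≠ 0))
        ).continuousAt.comp (by fun_prop)
    have hexp : Continuous fun ε : ℂ => -(r2 : ℂ) - ε := by fun_prop
    exact ((hζ.mul (hexp.const_cpow (Or.inl hn0)).continuousAt).mul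
      (hexp.const_cpow (Or.inl h2π)).continuousAt).mul continuousAt_const
  refine ((hcont.tendsto.mono_left nhdsWithin_le_nhds).congr' ?_).trans_eq ?_
  · filter_upwards [eventually_Gamma_one_add_sub_ne_zero hd] with ε hΓ
    have hP : (2 * (π : ℂ)) ^ ((r2 : ℂ) + ε) ≠ 0 := Complex.cpow_ne_zero_iff.2 (Or.inl h2π)
    rw [show -(r2 : ℂ) - ε = -((r2 : ℂ) + ε) by ring, Complex.cpow_neg (2 * (π : ℂ))]
    field_simp
  · simp only [sub_zero, add_zero, ← Int.cast_neg, Complex.cpow_intCast, div_eq_mul_inv]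
    congr 1
    ring

theorem boundary_term_regularization_general
    (r1 r2 : ℤ) (ho2 : Odd r2) (hr2 : 1 < r2)
    (d : ℤ) (hd : d < 0) (n : ℕ) (hn : 0 < n) :
    Tendsto (fun ε : ℂ =>
        Complex.Gamma (1 + (d : ℂ) - ε) *
          ((2 * (π : ℂ)) ^ ((r2 : ℂ) + ε) * riemannZeta (1 - (r2 : ℂ) - ε) /
              (Complex.Gamma (1 + (d : ℂ) + (r1 : ℂ) + (r2 : ℂ) + ε) *
                Complex.Gamma (1 + (d : ℂ) + (r2 : ℂ))) +
            riemannZeta (1 + (r2 : ℂ) + ε) * (n : ℂ) ^ (-(r2 : ℂ) - ε) /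
              ((2 * (π : ℂ)) ^ ((r2 : ℂ) + ε) * Complex.Gamma (1 + (d : ℂ) - ε) *
                Complex.Gamma (1 + (d : ℂ) + (r1 : ℂ)))))
      (𝓝[≠] 0)
      (𝓝 ((-1 : ℂ) ^ (d + 1) * (2 * (π : ℂ)) ^ (r2 : ℤ) *
            deriv riemannZeta (1 - (r2 : ℂ)) /
            (Complex.Gamma (1 + (d : ℂ) + (r2 : ℂ)) *
              Complex.Gamma (1 + (d : ℂ) + (r1 : ℂ) + (r2 : ℂ)) *
              Complex.Gamma (-(d : ℂ))) +
          (2 * (π : ℂ)) ^ (-r2 : ℤ) * riemannZeta (1 + (r2 : ℂ)) * (n : ℂ) ^ (-r2 : ℤ) /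
            Complex.Gamma (1 + (d : ℂ) + (r1 : ℂ)))) := by
  simpa only [mul_add] using (tendsto_Gamma_mul_trivial_zero_term r1 r2 ho2 hr2 d hd).add
    (tendsto_Gamma_mul_cancelled_Gamma_term r1 r2 hr2 d hd n hn)

/-- Limit of `Γ(1+d−ε)·Z^{(r1+ε, r2+ε)}_{d−ε}` as `ε → 0` through nonzero complex values. -/
theorem boundary_term_regularization
    (r1 r2 : ℤ) (ho1 : Odd r1) (ho2 : Odd r2) (hr1 : 1 < r1) (hr2 : 1 < r2)
    (d : ℤ) (hd : d < 0) (n : ℕ) (hn : 0 < n) :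
    Tendsto (fun ε : ℂ =>
        Complex.Gamma (1 + (d : ℂ) - ε) *
          ((2 * (π : ℂ)) ^ ((r2 : ℂ) + ε) * riemannZeta (1 - (r2 : ℂ) - ε) /
              (Complex.Gamma (1 + (d : ℂ) + (r1 : ℂ) + (r2 : ℂ) + ε) *
                Complex.Gamma (1 + (d : ℂ) + (r2 : ℂ))) +
            riemannZeta (1 + (r2 : ℂ) + ε) * (n : ℂ) ^ (-(r2 : ℂ) - ε) /
              ((2 * (π : ℂ)) ^ ((r2 : ℂ) + ε) * Complex.Gamma (1 + (d : ℂ) - ε) *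
                Complex.Gamma (1 + (d : ℂ) + (r1 : ℂ)))))
      (𝓝[≠] 0)
      (𝓝 ((-1 : ℂ) ^ (d + 1) * (2 * (π : ℂ)) ^ (r2 : ℤ) *
            deriv riemannZeta (1 - (r2 : ℂ)) /
            (Complex.Gamma (1 + (d : ℂ) + (r2 : ℂ)) *
              Complex.Gamma (1 + (d : ℂ) + (r1 : ℂ) + (r2 : ℂ)) *
              Complex.Gamma (-(d : ℂ))) +
          (2 * (π : ℂ)) ^ (-r2 : ℤ) * riemannZeta (1 + (r2 : ℂ)) * (n : ℂ) ^ (-r2 : ℤ) /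
            Complex.Gamma (1 + (d : ℂ) + (r1 : ℂ)))) :=
  boundary_term_regularization_general r1 r2 ho2 hr2 d hd n hn

end
end
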